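/- Let \(H_I = S\otimes B^\dagger + S^\dagger\otimes B\), and suppose the environment density matrix \(\rho_E\) satisfies \(\mathrm{Tr}(B^2\rho_E) = \mathrm{Tr}((B^\dagger)^2\rho_E) = 0\). Define \(z = \mathrm{Tr}(B^\dagger\rho_E B)\), \(\bar z = \mathrm{Tr}(B\rho_E B^\dagger)\), \(L_1 = \sqrt{z}\,S\), \(L_2 = \sqrt{\bar z}\,S^\dagger\). Then for every system density matrix \(\rho_S\): \(-\tfrac{1}{2}\,\mathrm{Tr}_E\,[H_I,[H_I,\rho_S\otimes\rho_E]] = \sum_{j=1}^2 \Big(L_j\rho_S L_j^\dagger - \tfrac12\{L_j^\dagger L_j, \rho_S\}\Big)\). -/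

import Mathlib

/-!
Write `H_I = P + Q` with `P = S ⊗ B†`, `Q = S† ⊗ B`. The double commutator is bilinear in `H_I`,
and the partial trace of `[A ⊗ X, [C ⊗ Y, ρ ⊗ σ]]` involves only `Tr(σXY)` and `Tr(σYX)`.
The `P`–`P` and `Q`–`Q` terms therefore carry `Tr(ρE B†B†)` and `Tr(ρE BB)`, which vanish, while
the cross terms carry `z` and `z̄` and assemble into the two Lindblad terms, since scaling a jump
operator by `√z` scales its dissipator by `z`.
-/

open Matrix Complex
open scoped Kronecker ComplexOrder

/-- Schatten 1-norm (trace norm) of a complex square matrix. -/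
noncomputable def traceNorm {n : Type*} [Fintype n] [DecidableEq n] (A : Matrix n n ℂ) : ℝ :=
  ((Matrix.posSemidef_conjTranspose_mul_self A).1.eigenvectorUnitary.1 *
    diagonal (((↑) : ℝ → ℂ) ∘ Real.sqrt ∘ (Matrix.posSemidef_conjTranspose_mul_self A).1.eigenvalues) *
    (star (Matrix.posSemidef_conjTranspose_mul_self A).1.eigenvectorUnitary : Matrix n n ℂ)).trace.re

/-- Operator (spectral) norm of a complex square matrix. -/
noncomputable def opNorm {n : Type*} [Fintype n] [DecidableEq n] (A : Matrix n n ℂ) : ℝ :=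
  ‖Matrix.toEuclideanCLM (𝕜 := ℂ) A‖

/-- Induced 1→1 norm of a superoperator (map on matrices). -/
noncomputable def indNorm {n : Type*} [Fintype n] [DecidableEq n]
    (f : Matrix n n ℂ → Matrix n n ℂ) : ℝ :=
  sSup {y | ∃ X : Matrix n n ℂ, traceNorm X ≤ 1 ∧ y = traceNorm (f X)}

/-- Partial trace over the environment (second) tensor factor. -/
noncomputable def ptraceE {s e : Type*} [Fintype e]
    (A : Matrix (s × e) (s × e) ℂ) : Matrix s s ℂ :=
  Matrix.of fun i j => ∑ k, A (i, k) (j, k)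

/-- A density matrix: positive semidefinite with unit trace. -/
def IsDensity {n : Type*} [Fintype n] [DecidableEq n] (ρ : Matrix n n ℂ) : Prop :=
  ρ.PosSemidef ∧ ρ.trace = 1

/-- Commutator of matrices. -/
noncomputable def mcomm {n : Type*} [Fintype n] (A X : Matrix n n ℂ) : Matrix n n ℂ := A * X - X * A

section PartialTrace

variable {s e : Type*} [Fintype e]

lemma ptraceE_add (A B : Matrix (s × e) (s × e) ℂ) :
    ptraceE (A + B) = ptraceE A + ptraceE B := by
  ext i j
  simp [ptraceE, Finset.sum_add_distrib]

lemma ptraceE_sub (A B : Matrix (s × e) (s × e) ℂ) :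
    ptraceE (A - B) = ptraceE A - ptraceE B := by
  ext i j
  simp [ptraceE, Finset.sum_sub_distrib]

lemma ptraceE_kronecker (A : Matrix s s ℂ) (X : Matrix e e ℂ) :
    ptraceE (A ⊗ₖ X) = X.trace • A := by
  ext i j
  simp [ptraceE, Matrix.trace, Finset.mul_sum, mul_comm]

end PartialTrace

section Commutator

variable {n : Type*} [Fintype n]

lemma mcomm_add_left (A B X : Matrix n n ℂ) : mcomm (A + B) X = mcomm A X + mcomm B X := by
  simp only [mcomm, Matrix.add_mul, Matrix.mul_add]
  abel

lemma mcomm_add_right (A X Y : Matrix n n ℂ) : mcomm A (X + Y) = mcomm A X + mcomm A Y := by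
  simp only [mcomm, Matrix.add_mul, Matrix.mul_add]
  abel

end Commutator

/-- Cyclicity of the trace collapses the four environment traces to two. -/
lemma ptraceE_mcomm_kronecker_mcomm_kronecker {s e : Type*} [Fintype s] [Fintype e]
    (A C ρ : Matrix s s ℂ) (X Y σ : Matrix e e ℂ) :
    ptraceE (mcomm (A ⊗ₖ X) (mcomm (C ⊗ₖ Y) (ρ ⊗ₖ σ))) =
      (σ * X * Y).trace • (A * C * ρ - C * ρ * A) + (σ * Y * X).trace • (ρ * C * A - A * ρ * C) := by
  have hXY : (X * (Y * σ)).trace = (σ * (X * Y)).trace := by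
    rw [← Matrix.mul_assoc, Matrix.trace_mul_comm]
  have hYσX : (Y * (σ * X)).trace = (σ * (X * Y)).trace := by
    rw [Matrix.trace_mul_comm, Matrix.mul_assoc]
  have hXσY : (X * (σ * Y)).trace = (σ * (Y * X)).trace := by
    rw [Matrix.trace_mul_comm, Matrix.mul_assoc]
  simp only [mcomm, Matrix.mul_sub, Matrix.sub_mul, ← Matrix.mul_kronecker_mul,
    ptraceE_sub, ptraceE_kronecker, Matrix.mul_assoc, hXY, hYσX, hXσY]
  module

lemma Matrix.PosSemidef.ofReal_re_trace {n : Type*} [Fintype n] {M : Matrix n n ℂ}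
    (hM : M.PosSemidef) : (M.trace.re : ℂ) = M.trace :=
  (Complex.eq_re_of_ofReal_le (by rw [Complex.ofReal_zero]; exact hM.trace_nonneg)).symm

noncomputable def lindbladTerm {n : Type*} [Fintype n] (L ρ : Matrix n n ℂ) : Matrix n n ℂ :=
  L * ρ * Lᴴ - (1/2 : ℂ) • (Lᴴ * L * ρ + ρ * (Lᴴ * L))

lemma lindbladTerm_ofReal_sqrt_smul {n : Type*} [Fintype n] {z : ℝ}
    (hz : 0 ≤ z) (L ρ : Matrix n n ℂ) :
    lindbladTerm (((√z : ℝ) : ℂ) • L) ρ = (z : ℂ) • lindbladTerm L ρ := by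
  have hsq : ((√z : ℝ) : ℂ) * ((√z : ℝ) : ℂ) = z := by
    rw [← Complex.ofReal_mul, Real.mul_self_sqrt hz]
  simp only [lindbladTerm, Matrix.conjTranspose_smul, Complex.star_def, Complex.conj_ofReal,
    Matrix.smul_mul, Matrix.mul_smul, smul_smul, hsq]
  module

theorem stmt10_general {s e : Type*} [Fintype s] [Fintype e] [DecidableEq e]
    (S : Matrix s s ℂ) (B : Matrix e e ℂ) (ρS : Matrix s s ℂ) (ρE : Matrix e e ℂ)
    (hρE : IsDensity ρE)
    (hB2 : (B * B * ρE).trace = 0) (hB2' : (Bᴴ * Bᴴ * ρE).trace = 0) :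
    let HI : Matrix (s × e) (s × e) ℂ := S ⊗ₖ Bᴴ + Sᴴ ⊗ₖ B
    let z : ℝ := ((Bᴴ * ρE * B).trace).re
    let zbar : ℝ := ((B * ρE * Bᴴ).trace).re
    let L₁ : Matrix s s ℂ := ((Real.sqrt z : ℝ) : ℂ) • S
    let L₂ : Matrix s s ℂ := ((Real.sqrt zbar : ℝ) : ℂ) • Sᴴ
    (-(1/2 : ℂ)) • ptraceE (mcomm HI (mcomm HI (ρS ⊗ₖ ρE))) =
      (L₁ * ρS * L₁ᴴ - (1/2 : ℂ) • (L₁ᴴ * L₁ * ρS + ρS * (L₁ᴴ * L₁))) +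
      (L₂ * ρS * L₂ᴴ - (1/2 : ℂ) • (L₂ᴴ * L₂ * ρS + ρS * (L₂ᴴ * L₂))) := by
  intro HI z zbar L₁ L₂
  have hMz : (Bᴴ * ρE * B).PosSemidef := hρE.1.conjTranspose_mul_mul_same B
  have hMzbar : (B * ρE * Bᴴ).PosSemidef := hρE.1.mul_mul_conjTranspose_same B
  have hz : (z : ℂ) = (ρE * B * Bᴴ).trace := by
    rw [Matrix.trace_mul_cycle]; exact hMz.ofReal_re_trace
  have hzbar : (zbar : ℂ) = (ρE * Bᴴ * B).trace := by
    rw [Matrix.trace_mul_cycle]; exact hMzbar.ofReal_re_trace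
  have hBB : (ρE * B * B).trace = 0 := by rw [Matrix.mul_assoc, Matrix.trace_mul_comm, hB2]
  have hBB' : (ρE * Bᴴ * Bᴴ).trace = 0 := by rw [Matrix.mul_assoc, Matrix.trace_mul_comm, hB2']
  show _ = lindbladTerm L₁ ρS + lindbladTerm L₂ ρS
  rw [lindbladTerm_ofReal_sqrt_smul (Complex.nonneg_iff.mp hMz.trace_nonneg).1,
    lindbladTerm_ofReal_sqrt_smul (Complex.nonneg_iff.mp hMzbar.trace_nonneg).1, hz, hzbar]
  simp only [HI, mcomm_add_left, mcomm_add_right, ptraceE_add,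
    ptraceE_mcomm_kronecker_mcomm_kronecker, hBB, hBB', zero_smul, zero_add, add_zero]
  simp only [lindbladTerm, Matrix.conjTranspose_conjTranspose, Matrix.mul_assoc]
  module

/-- With H_I = S⊗B† + S†⊗B and Tr(B²ρE) = Tr((B†)²ρE) = 0, the dissipator
-½ Tr_E [H_I,[H_I,ρS⊗ρE]] takes Lindblad form with jumps L₁ = √z S, L₂ = √z̄ S†. -/
theorem stmt10 {s e : Type*} [Fintype s] [DecidableEq s] [Fintype e] [DecidableEq e]
    (S : Matrix s s ℂ) (B : Matrix e e ℂ) (ρS : Matrix s s ℂ) (ρE : Matrix e e ℂ)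
    (hρS : IsDensity ρS) (hρE : IsDensity ρE)
    (hB2 : (B * B * ρE).trace = 0) (hB2' : (Bᴴ * Bᴴ * ρE).trace = 0) :
    let HI : Matrix (s × e) (s × e) ℂ := S ⊗ₖ Bᴴ + Sᴴ ⊗ₖ B
    let z : ℝ := ((Bᴴ * ρE * B).trace).re
    let zbar : ℝ := ((B * ρE * Bᴴ).trace).re
    let L₁ : Matrix s s ℂ := ((Real.sqrt z : ℝ) : ℂ) • S
    let L₂ : Matrix s s ℂ := ((Real.sqrt zbar : ℝ) : ℂ) • Sᴴ
    (-(1/2 : ℂ)) • ptraceE (mcomm HI (mcomm HI (ρS ⊗ₖ ρE))) =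
      (L₁ * ρS * L₁ᴴ - (1/2 : ℂ) • (L₁ᴴ * L₁ * ρS + ρS * (L₁ᴴ * L₁))) +
      (L₂ * ρS * L₂ᴴ - (1/2 : ℂ) • (L₂ᴴ * L₂ * ρS + ρS * (L₂ᴴ * L₂))) :=
  stmt10_general S B ρS ρE hρE hB2 hB2'
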